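/- Under the same assumptions, let ξ solve the linear variational equation Δξ_t = b_x(t)ξ_t + δ_{ts} b_u(t)εΔv + ∑_i e_i [ξ_t^* σ_{ix}(t) + δ_{ts} ε Δv^* σ_{iu}(t)] M_{t+1}, ξ_0 = 0, where the coefficients are evaluated along (X̄, ū). Then sup_{0≤t≤T} E|ξ_t|² ≤ C ε² E|Δv|² and sup_{0≤t≤T} E|X^ε_t - X̄_t - ξ_t|² = o(ε²) as ε → 0. -/

import Mathlib

open MeasureTheory Matrix Finset Filter

/-- The `d × (d-1)` matrix `Ĩ`: identity on top, last row all `-1` (here `d = n + 1`). -/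
noncomputable def Itilde (n : ℕ) : Matrix (Fin (n + 1)) (Fin n) ℝ :=
  Matrix.of fun i j => if (i : ℕ) < n then (if (i : ℕ) = (j : ℕ) then 1 else 0) else -1

/-- The martingale difference `M_{t+1} = W_{t+1} - 𝔼[W_{t+1}|ℱ_t]` (componentwise). -/
noncomputable def Mnext {Ω : Type*} [mΩ : MeasurableSpace Ω] (μ : MeasureTheory.Measure Ω)
    {d : ℕ} (ℱ : MeasureTheory.Filtration ℕ mΩ) (W : ℕ → Ω → Fin d → ℝ)
    (t : ℕ) (ω : Ω) : Fin d → ℝ :=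
  fun i => W (t + 1) ω i - (μ[fun ω' => W (t + 1) ω' i | ℱ t]) ω

set_option maxHeartbeats 1600000
section AuxLemmas


lemma vecMul_Itilde {n : ℕ} (v : Fin (n + 1) → ℝ) (j : Fin n) :
    (v ᵥ* Itilde n) j = v j.castSucc - v (Fin.last n) := by
  have h : (v ᵥ* Itilde n) j = ∑ i : Fin (n + 1), v i *
      (if (i : ℕ) < n then (if (i : ℕ) = (j : ℕ) then 1 else 0) else -1) := rfl
  rw [h, Fin.sum_univ_castSucc]
  have h1 : ∀ k : Fin n, v k.castSucc *
      (if ((Fin.castSucc k : Fin (n+1)) : ℕ) < n then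
        (if ((Fin.castSucc k : Fin (n+1)) : ℕ) = (j : ℕ) then 1 else 0) else -1)
      = if k = j then v k.castSucc else 0 := by
    intro k
    rw [if_pos (by simpa using k.isLt)]
    by_cases hkj : k = j
    · simp [hkj]
    · rw [if_neg (by simpa [Fin.val_eq_val] using hkj), if_neg hkj, mul_zero]
  rw [Finset.sum_congr rfl fun k _ => h1 k]
  rw [Finset.sum_ite_eq' Finset.univ j (fun k => v k.castSucc)]
  simp only [Finset.mem_univ, if_true]
  rw [Fin.val_last, if_neg (lt_irrefl n)]
  ring

lemma dotProduct_eq_itilde {n : ℕ} (v M : Fin (n + 1) → ℝ) (hM : ∑ i, M i = 0) :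
    v ⬝ᵥ M = ∑ j : Fin n, (v ᵥ* Itilde n) j * M j.castSucc := by
  have hlast : M (Fin.last n) = -∑ j : Fin n, M j.castSucc := by
    have h := Fin.sum_univ_castSucc (f := M)
    rw [h] at hM
    linarith
  have hdot : v ⬝ᵥ M = ∑ i : Fin (n+1), v i * M i := rfl
  have hR : ∑ j : Fin n, (v ᵥ* Itilde n) j * M j.castSucc
      = ∑ j : Fin n, (v j.castSucc - v (Fin.last n)) * M j.castSucc :=
    Finset.sum_congr rfl fun j _ => by rw [vecMul_Itilde]
  rw [hdot, Fin.sum_univ_castSucc, hlast, hR]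
  simp only [sub_mul, Finset.sum_sub_distrib]
  rw [← Finset.mul_sum]
  ring

lemma pi_norm_le_sum_abs {d : ℕ} (v : Fin d → ℝ) : ‖v‖ ≤ ∑ j, |v j| := by
  refine (pi_norm_le_iff_of_nonneg (by positivity)).mpr fun i => ?_
  rw [Real.norm_eq_abs]
  exact Finset.single_le_sum (fun j _ => abs_nonneg (v j)) (Finset.mem_univ i)

lemma pi_norm_sq_le {d : ℕ} (v : Fin d → ℝ) : ‖v‖ ^ 2 ≤ ∑ i, v i ^ 2 := by
  have h1 : ‖v‖ ≤ Real.sqrt (∑ i, v i ^ 2) := by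
    refine (pi_norm_le_iff_of_nonneg (Real.sqrt_nonneg _)).mpr fun i => ?_
    rw [Real.norm_eq_abs, ← Real.sqrt_sq_eq_abs]
    exact Real.sqrt_le_sqrt (Finset.single_le_sum (fun j _ => sq_nonneg (v j)) (Finset.mem_univ i))
  calc ‖v‖ ^ 2 ≤ Real.sqrt (∑ i, v i ^ 2) ^ 2 := pow_le_pow_left₀ (norm_nonneg _) h1 2
    _ = ∑ i, v i ^ 2 := Real.sq_sqrt (Finset.sum_nonneg fun j _ => sq_nonneg _)

lemma abs_dotProduct_le {ι : Type*} [Fintype ι] (v M : ι → ℝ) {B : ℝ}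
    (hB : ∀ i, |M i| ≤ B) : |v ⬝ᵥ M| ≤ (Fintype.card ι : ℝ) * (‖v‖ * B) := by
  have h : v ⬝ᵥ M = ∑ i, v i * M i := rfl
  rw [h]
  calc |∑ i, v i * M i| ≤ ∑ i, |v i * M i| := Finset.abs_sum_le_sum_abs _ _
    _ ≤ ∑ _i : ι, ‖v‖ * B := Finset.sum_le_sum fun i _ => by
        rw [abs_mul]
        exact mul_le_mul (by simpa [Real.norm_eq_abs] using norm_le_pi_norm v i) (hB i)
          (abs_nonneg _) (norm_nonneg _)
    _ = (Fintype.card ι : ℝ) * (‖v‖ * B) := by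
        rw [Finset.sum_const, Finset.card_univ, nsmul_eq_mul]

lemma sum_Mnext_zero {Ω : Type*} [mΩ : MeasurableSpace Ω] [Fintype Ω] [MeasurableSingletonClass Ω]
    (μ : Measure Ω) [IsProbabilityMeasure μ] {d : ℕ} (ℱ : Filtration ℕ mΩ)
    (W : ℕ → Ω → Fin (d + 1) → ℝ) (t : ℕ)
    (hb : ∀ᵐ ω ∂μ, ∃ k : Fin (d + 1), W (t + 1) ω = fun j => if j = k then 1 else 0) :
    ∀ᵐ ω ∂μ, ∑ i, Mnext μ ℱ W t ω i = 0 := by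
  have hsum1 : (fun ω => ∑ i, W (t + 1) ω i) =ᵐ[μ] fun _ => (1 : ℝ) := by
    filter_upwards [hb] with ω hω
    obtain ⟨kk, hk⟩ := hω
    simp [hk]
  have hsplit : μ[fun ω => ∑ i, W (t + 1) ω i|ℱ t]
      =ᵐ[μ] ∑ i, μ[fun ω' => W (t + 1) ω' i|ℱ t] := by
    have h1 : (fun ω => ∑ i, W (t + 1) ω i) = ∑ i, (fun ω' => W (t + 1) ω' i) := by
      funext ω'; simp
    rw [h1]
    exact condExp_finset_sum (fun i _ => Integrable.of_finite (μ := μ) (f := fun ω' => W (t + 1) ω' i)) (ℱ t)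
  have hone : μ[fun ω => ∑ i, W (t + 1) ω i|ℱ t] =ᵐ[μ] fun _ => (1 : ℝ) := by
    refine (condExp_congr_ae hsum1).trans ?_
    rw [condExp_const (ℱ.le t)]
  have hsum2 : (∑ i, μ[fun ω' => W (t + 1) ω' i|ℱ t]) =ᵐ[μ] fun _ => (1 : ℝ) :=
    hsplit.symm.trans hone
  filter_upwards [hsum1, hsum2] with ω h1 h2
  have h2' : ∑ i, (μ[fun ω' => W (t + 1) ω' i|ℱ t]) ω = 1 := by
    have := h2
    rwa [Finset.sum_apply] at this
  simp only [Mnext, Finset.sum_sub_distrib]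
  rw [h1, h2', sub_self]



lemma taylor_decomp {E U V : Type*} [NormedAddCommGroup E] [NormedSpace ℝ E]
    [NormedAddCommGroup U] [NormedSpace ℝ U] [NormedAddCommGroup V] [NormedSpace ℝ V]
    (G : E → U → V) (x₀ : E) (h : E) (u₀ : U) (k : U) (ξv : E)
    (hG : DifferentiableAt ℝ (fun pp : E × U => G pp.1 pp.2) (x₀, u₀)) :
    G (x₀ + h) (u₀ + k) - G x₀ u₀
      - fderiv ℝ (fun x => G x u₀) x₀ ξv
      - fderiv ℝ (fun u => G x₀ u) u₀ k
    = ((fun pp : E × U => G pp.1 pp.2) ((x₀, u₀) + (h, k))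
        - (fun pp : E × U => G pp.1 pp.2) (x₀, u₀)
        - fderiv ℝ (fun pp : E × U => G pp.1 pp.2) (x₀, u₀) (h, k))
      + fderiv ℝ (fun x => G x u₀) x₀ (h - ξv) := by
  have hd := hG.hasFDerivAt
  have h1 : HasFDerivAt (fun x => G x u₀)
      ((fderiv ℝ (fun pp : E × U => G pp.1 pp.2) (x₀, u₀)).comp
        (ContinuousLinearMap.inl ℝ E U)) x₀ :=
    hd.comp x₀ (f := fun e => (e, u₀)) (hasFDerivAt_prodMk_left x₀ u₀)
  have h2 : HasFDerivAt (fun u => G x₀ u)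
      ((fderiv ℝ (fun pp : E × U => G pp.1 pp.2) (x₀, u₀)).comp
        (ContinuousLinearMap.inr ℝ E U)) u₀ :=
    hd.comp u₀ (f := fun e => (x₀, e)) (hasFDerivAt_prodMk_right x₀ u₀)
  rw [h1.fderiv, h2.fderiv]
  have hq : (fun pp : E × U => G pp.1 pp.2) ((x₀, u₀) + (h, k)) = G (x₀ + h) (u₀ + k) := rfl
  have hhk : ((h, k) : E × U) = (h, 0) + (0, k) := by simp
  have hDq : fderiv ℝ (fun pp : E × U => G pp.1 pp.2) (x₀, u₀) (h, k)
      = ((fderiv ℝ (fun pp : E × U => G pp.1 pp.2) (x₀, u₀)).comp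
          (ContinuousLinearMap.inl ℝ E U)) h
        + ((fderiv ℝ (fun pp : E × U => G pp.1 pp.2) (x₀, u₀)).comp
          (ContinuousLinearMap.inr ℝ E U)) k := by
    rw [ContinuousLinearMap.comp_apply, ContinuousLinearMap.comp_apply,
      ContinuousLinearMap.inl_apply, ContinuousLinearMap.inr_apply, hhk, map_add]
  rw [hq, hDq, map_sub]
  abel

lemma remainder_tendsto {E U V : Type*} [NormedAddCommGroup E] [NormedSpace ℝ E]
    [NormedAddCommGroup U] [NormedSpace ℝ U] [NormedAddCommGroup V] [NormedSpace ℝ V]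
    (G : E → U → V) (x₀ : E) (u₀ : U)
    (hG : DifferentiableAt ℝ (fun pp : E × U => G pp.1 pp.2) (x₀, u₀))
    {h : ℝ → E} {k : ℝ → U}
    (hq0 : Tendsto (fun ε => ((h ε, k ε) : E × U)) (nhdsWithin 0 (Set.Ioi 0)) (nhds 0))
    (hqO : (fun ε => ((h ε, k ε) : E × U)) =O[nhdsWithin 0 (Set.Ioi 0)] fun ε => ε) :
    Tendsto (fun ε => ‖(fun pp : E × U => G pp.1 pp.2) ((x₀, u₀) + (h ε, k ε))
        - (fun pp : E × U => G pp.1 pp.2) (x₀, u₀)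
        - fderiv ℝ (fun pp : E × U => G pp.1 pp.2) (x₀, u₀) (h ε, k ε)‖ / ε)
      (nhdsWithin 0 (Set.Ioi 0)) (nhds 0) := by
  have h1 := hasFDerivAt_iff_isLittleO_nhds_zero.mp hG.hasFDerivAt
  have h2 : (fun ε => (fun pp : E × U => G pp.1 pp.2) ((x₀, u₀) + (h ε, k ε))
        - (fun pp : E × U => G pp.1 pp.2) (x₀, u₀)
        - fderiv ℝ (fun pp : E × U => G pp.1 pp.2) (x₀, u₀) (h ε, k ε))
      =o[nhdsWithin 0 (Set.Ioi 0)] (fun ε => ((h ε, k ε) : E × U)) :=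
    h1.comp_tendsto hq0
  have h3 := (h2.trans_isBigO hqO).norm_left
  refine (Asymptotics.isLittleO_iff_tendsto' ?_).mp h3
  filter_upwards [self_mem_nhdsWithin] with ε (hε : ε ∈ Set.Ioi (0:ℝ))
  exact fun h0 => absurd h0 (ne_of_gt hε)

end AuxLemmas

/-- **First-order variation of the forward state.**  Let `ξ` solve the linear variational
equation `Δξ_t = b_x(t)ξ_t + δ_{ts} b_u(t)εΔv + ∑_i e_i [ξ_t^* σ_{ix}(t) + δ_{ts} ε Δv^*
σ_{iu}(t)] M_{t+1}`, `ξ_0 = 0`, with coefficients evaluated along `(X̄, ū)`.  Then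
`sup_{0≤t≤T} 𝔼|ξ_t|² ≤ C ε² 𝔼|Δv|²` and `sup_{0≤t≤T} 𝔼|X^ε_t - X̄_t - ξ_t|² = o(ε²)`
as `ε → 0⁺`. -/
theorem forward_variation_estimate
    {Ω : Type*} [mΩ : MeasurableSpace Ω] [Fintype Ω] [MeasurableSingletonClass Ω]
    (μ : Measure Ω) [IsProbabilityMeasure μ] {n' m r : ℕ} (T s : ℕ) (hs : s ≤ T)
    (ℱ : Filtration ℕ mΩ) (W : ℕ → Ω → Fin (n' + 1) → ℝ)
    (hWad : ∀ t i, Measurable[ℱ t] fun ω => W t ω i)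
    (hbasis : ∀ t, ∀ᵐ ω ∂μ, ∃ k : Fin (n' + 1), W t ω = fun j => if j = k then 1 else 0)
    (b : ℕ → Ω → (Fin m → ℝ) → (Fin r → ℝ) → Fin m → ℝ)
    (σ : Fin m → ℕ → Ω → (Fin m → ℝ) → (Fin r → ℝ) → Fin (n' + 1) → ℝ)
    (hbad : ∀ t x u_, ∀ i, Measurable[ℱ t] fun ω => b t ω x u_ i)
    (hσad : ∀ i t x u_, ∀ j, Measurable[ℱ t] fun ω => σ i t ω x u_ j)
    -- continuous differentiability with uniformly bounded derivatives
    (hbC1 : ∀ t ω, ContDiff ℝ 1 fun p : (Fin m → ℝ) × (Fin r → ℝ) => b t ω p.1 p.2)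
    (hσC1 : ∀ i t ω, ContDiff ℝ 1 fun p : (Fin m → ℝ) × (Fin r → ℝ) => σ i t ω p.1 p.2)
    (L : NNReal)
    (hbLip : ∀ t ω, LipschitzWith L fun p : (Fin m → ℝ) × (Fin r → ℝ) => b t ω p.1 p.2)
    (hσLip : ∀ i t ω,
      LipschitzWith L fun p : (Fin m → ℝ) × (Fin r → ℝ) => (σ i t ω p.1 p.2) ᵥ* Itilde n')
    (ub : ℕ → Ω → Fin r → ℝ) (hub : ∀ t i, Measurable[ℱ t] fun ω => ub t ω i)
    (Δv : Ω → Fin r → ℝ) (hΔv : ∀ i, Measurable[ℱ s] fun ω => Δv ω i)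
    (Xb : ℕ → Ω → Fin m → ℝ) (Xε : ℝ → ℕ → Ω → Fin m → ℝ)
    (hXbad : ∀ t i, Measurable[ℱ t] fun ω => Xb t ω i)
    (hXεad : ∀ ε ∈ Set.Icc (0:ℝ) 1, ∀ t i, Measurable[ℱ t] fun ω => Xε ε t ω i)
    (hinit : ∀ ε ∈ Set.Icc (0:ℝ) 1, ∀ ω, Xε ε 0 ω = Xb 0 ω)
    (hXbdyn : ∀ t < T, ∀ᵐ ω ∂μ,
      Xb (t + 1) ω = Xb t ω + b t ω (Xb t ω) (ub t ω)
        + fun i => (σ i t ω (Xb t ω) (ub t ω)) ⬝ᵥ Mnext μ ℱ W t ω)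
    (hXεdyn : ∀ ε ∈ Set.Icc (0:ℝ) 1, ∀ t < T, ∀ᵐ ω ∂μ,
      Xε ε (t + 1) ω = Xε ε t ω
        + b t ω (Xε ε t ω) (ub t ω + (if t = s then ε • Δv ω else 0))
        + fun i => (σ i t ω (Xε ε t ω) (ub t ω + (if t = s then ε • Δv ω else 0)))
            ⬝ᵥ Mnext μ ℱ W t ω)
    -- the first-order variation process `ξ` (variational equation, coefficients at `(X̄,ū)`)
    (ξ : ℝ → ℕ → Ω → Fin m → ℝ)
    (hξ0 : ∀ ε ∈ Set.Icc (0:ℝ) 1, ∀ ω, ξ ε 0 ω = 0)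
    (hξdyn : ∀ ε ∈ Set.Icc (0:ℝ) 1, ∀ t < T, ∀ᵐ ω ∂μ,
      ξ ε (t + 1) ω = ξ ε t ω
        + fderiv ℝ (fun x => b t ω x (ub t ω)) (Xb t ω) (ξ ε t ω)
        + (if t = s then ε • fderiv ℝ (fun u_ => b t ω (Xb t ω) u_) (ub t ω) (Δv ω) else 0)
        + fun i =>
            (fderiv ℝ (fun x => σ i t ω x (ub t ω)) (Xb t ω) (ξ ε t ω)
              + (if t = s then
                  ε • fderiv ℝ (fun u_ => σ i t ω (Xb t ω) u_) (ub t ω) (Δv ω) else 0))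
              ⬝ᵥ Mnext μ ℱ W t ω) :
    (∃ C > (0 : ℝ), ∀ ε ∈ Set.Icc (0:ℝ) 1, ∀ t ≤ T,
      ∫ ω, (∑ i, (ξ ε t ω i) ^ 2) ∂μ ≤ C * ε ^ 2 * ∫ ω, (∑ j, (Δv ω j) ^ 2) ∂μ) ∧
    (∀ t ≤ T,
      Tendsto (fun ε : ℝ =>
          (∫ ω, (∑ i, (Xε ε t ω i - Xb t ω i - ξ ε t ω i) ^ 2) ∂μ) / ε ^ 2)
        (nhdsWithin 0 (Set.Ioi 0)) (nhds 0)) := by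
  classical
  have hIoc : ∀ᶠ ε in nhdsWithin (0:ℝ) (Set.Ioi 0), ε ∈ Set.Ioc (0:ℝ) 1 :=
    Ioc_mem_nhdsGT_of_mem ⟨le_rfl, one_pos⟩
  have hpos : ∀ᶠ ε in nhdsWithin (0:ℝ) (Set.Ioi 0), (0:ℝ) < ε := by
    filter_upwards [self_mem_nhdsWithin] with ε (hε : ε ∈ Set.Ioi (0:ℝ)) using hε
  -- pointwise versions of the dynamics on atoms of positive mass
  have hXb' : ∀ ω, μ {ω} ≠ 0 → ∀ t, t < T → Xb (t + 1) ω = Xb t ω + b t ω (Xb t ω) (ub t ω)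
      + fun i => (σ i t ω (Xb t ω) (ub t ω)) ⬝ᵥ Mnext μ ℱ W t ω :=
    fun ω hω t ht => (ae_iff_of_countable.mp (hXbdyn t ht)) ω hω
  have hXε' : ∀ ω, μ {ω} ≠ 0 → ∀ ε ∈ Set.Icc (0:ℝ) 1, ∀ t, t < T →
      Xε ε (t + 1) ω = Xε ε t ω
        + b t ω (Xε ε t ω) (ub t ω + (if t = s then ε • Δv ω else 0))
        + fun i => (σ i t ω (Xε ε t ω) (ub t ω + (if t = s then ε • Δv ω else 0)))
            ⬝ᵥ Mnext μ ℱ W t ω :=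
    fun ω hω ε hε t ht => (ae_iff_of_countable.mp (hXεdyn ε hε t ht)) ω hω
  have hξ' : ∀ ω, μ {ω} ≠ 0 → ∀ ε ∈ Set.Icc (0:ℝ) 1, ∀ t, t < T →
      ξ ε (t + 1) ω = ξ ε t ω
        + fderiv ℝ (fun x => b t ω x (ub t ω)) (Xb t ω) (ξ ε t ω)
        + (if t = s then ε • fderiv ℝ (fun u_ => b t ω (Xb t ω) u_) (ub t ω) (Δv ω) else 0)
        + fun i =>
            (fderiv ℝ (fun x => σ i t ω x (ub t ω)) (Xb t ω) (ξ ε t ω)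
              + (if t = s then
                  ε • fderiv ℝ (fun u_ => σ i t ω (Xb t ω) u_) (ub t ω) (Δv ω) else 0))
              ⬝ᵥ Mnext μ ℱ W t ω :=
    fun ω hω ε hε t ht => (ae_iff_of_countable.mp (hξdyn ε hε t ht)) ω hω
  have hM0 : ∀ ω, μ {ω} ≠ 0 → ∀ t, ∑ i, Mnext μ ℱ W t ω i = 0 :=
    fun ω hω t => (ae_iff_of_countable.mp (sum_Mnext_zero μ ℱ W t (hbasis (t + 1)))) ω hω
  -- a uniform bound on the martingale differences
  obtain ⟨B₀, hB₀⟩ := Finite.exists_le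
    (fun pp : Fin T × Ω × Fin (n' + 1) => |Mnext μ ℱ W (pp.1 : ℕ) pp.2.1 pp.2.2|)
  have hB : ∀ t, t < T → ∀ ω i, |Mnext μ ℱ W t ω i| ≤ max B₀ 0 :=
    fun t ht ω i => le_trans (hB₀ (⟨t, ht⟩, ω, i)) (le_max_left _ _)
  have hBnn : (0:ℝ) ≤ max B₀ 0 := le_max_right _ _
  -- Claim B : pathwise first-order bound on `Xε - Xb`
  have claimB : ∀ ω, μ {ω} ≠ 0 → ∀ t, t ≤ T → ∃ C, 0 ≤ C ∧ ∀ ε ∈ Set.Icc (0:ℝ) 1,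
      ∀ i, |Xε ε t ω i - Xb t ω i| ≤ C * ε := by
    intro ω hω t
    induction t with
    | zero =>
      exact fun _ => ⟨0, le_rfl, fun ε hε i => by
        rw [congrFun (hinit ε hε ω) i]; simp⟩
    | succ t ih =>
      intro ht1
      have htT : t < T := ht1
      obtain ⟨C, hC0, hC⟩ := ih htT.le
      set cn : ℝ := (Fintype.card (Fin n') : ℝ) with hcn
      have hcnn : (0:ℝ) ≤ cn := Nat.cast_nonneg _
      refine ⟨C + (L : ℝ) * (C + ‖Δv ω‖) * (1 + cn * max B₀ 0), ?_, ?_⟩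
      · exact add_nonneg hC0 (mul_nonneg (mul_nonneg L.coe_nonneg
          (add_nonneg hC0 (norm_nonneg _)))
          (add_nonneg zero_le_one (mul_nonneg hcnn hBnn)))
      intro ε hε i
      obtain ⟨hε0, hε1⟩ := hε
      have e1 := congrFun (hXε' ω hω ε ⟨hε0, hε1⟩ t htT) i
      have e2 := congrFun (hXb' ω hω t htT) i
      simp only [Pi.add_apply] at e1 e2
      -- distances
      have hXd : dist (Xε ε t ω) (Xb t ω) ≤ C * ε := by
        rw [dist_pi_le_iff (by positivity)]
        intro j
        rw [Real.dist_eq]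
        exact hC ε ⟨hε0, hε1⟩ j
      have hud : dist (ub t ω + (if t = s then ε • Δv ω else 0)) (ub t ω) ≤ ‖Δv ω‖ * ε := by
        rw [dist_eq_norm, add_sub_cancel_left]
        by_cases hts : t = s
        · rw [if_pos hts, norm_smul, Real.norm_eq_abs, abs_of_nonneg hε0, mul_comm]
        · rw [if_neg hts, norm_zero]
          positivity
      have hPd : dist ((Xε ε t ω, ub t ω + (if t = s then ε • Δv ω else 0)) :
            (Fin m → ℝ) × (Fin r → ℝ)) (Xb t ω, ub t ω) ≤ (C + ‖Δv ω‖) * ε := by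
        rw [Prod.dist_eq]
        apply max_le
        · exact hXd.trans (by nlinarith [norm_nonneg (Δv ω)])
        · exact hud.trans (by nlinarith [hC0])
      -- Lipschitz bound for b
      have hLb : dist (b t ω (Xε ε t ω) (ub t ω + (if t = s then ε • Δv ω else 0)))
            (b t ω (Xb t ω) (ub t ω))
          ≤ (L : ℝ) * dist ((Xε ε t ω, ub t ω + (if t = s then ε • Δv ω else 0)) :
            (Fin m → ℝ) × (Fin r → ℝ)) (Xb t ω, ub t ω) :=
        (hbLip t ω).dist_le_mul
          (Xε ε t ω, ub t ω + (if t = s then ε • Δv ω else 0)) (Xb t ω, ub t ω)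
      have hb1 : |b t ω (Xε ε t ω) (ub t ω + (if t = s then ε • Δv ω else 0)) i
            - b t ω (Xb t ω) (ub t ω) i| ≤ (L : ℝ) * ((C + ‖Δv ω‖) * ε) := by
        calc |_ - _| = dist (b t ω (Xε ε t ω) (ub t ω + (if t = s then ε • Δv ω else 0)) i)
              (b t ω (Xb t ω) (ub t ω) i) := (Real.dist_eq _ _).symm
          _ ≤ dist (b t ω (Xε ε t ω) (ub t ω + (if t = s then ε • Δv ω else 0)))
              (b t ω (Xb t ω) (ub t ω)) := dist_le_pi_dist _ _ i
          _ ≤ (L : ℝ) * dist ((Xε ε t ω, ub t ω + (if t = s then ε • Δv ω else 0)) :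
              (Fin m → ℝ) × (Fin r → ℝ)) (Xb t ω, ub t ω) := hLb
          _ ≤ (L : ℝ) * ((C + ‖Δv ω‖) * ε) :=
              mul_le_mul_of_nonneg_left hPd L.coe_nonneg
      -- Lipschitz bound for σ via Itilde
      have hLσ : dist ((σ i t ω (Xε ε t ω) (ub t ω + (if t = s then ε • Δv ω else 0)))
              ᵥ* Itilde n')
            ((σ i t ω (Xb t ω) (ub t ω)) ᵥ* Itilde n')
          ≤ (L : ℝ) * dist ((Xε ε t ω, ub t ω + (if t = s then ε • Δv ω else 0)) :
            (Fin m → ℝ) × (Fin r → ℝ)) (Xb t ω, ub t ω) :=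
        (hσLip i t ω).dist_le_mul
          (Xε ε t ω, ub t ω + (if t = s then ε • Δv ω else 0)) (Xb t ω, ub t ω)
      have h3 : ∀ j : Fin n',
          |((σ i t ω (Xε ε t ω) (ub t ω + (if t = s then ε • Δv ω else 0))
            - σ i t ω (Xb t ω) (ub t ω)) ᵥ* Itilde n') j| ≤ (L : ℝ) * ((C + ‖Δv ω‖) * ε) := by
        intro j
        have e : ((σ i t ω (Xε ε t ω) (ub t ω + (if t = s then ε • Δv ω else 0))
              - σ i t ω (Xb t ω) (ub t ω)) ᵥ* Itilde n') j
            = ((σ i t ω (Xε ε t ω) (ub t ω + (if t = s then ε • Δv ω else 0))) ᵥ* Itilde n') j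
              - ((σ i t ω (Xb t ω) (ub t ω)) ᵥ* Itilde n') j := by
          rw [Matrix.sub_vecMul]; rfl
        rw [e]
        calc |_ - _| = dist _ _ := (Real.dist_eq _ _).symm
          _ ≤ dist ((σ i t ω (Xε ε t ω) (ub t ω + (if t = s then ε • Δv ω else 0)))
                ᵥ* Itilde n')
              ((σ i t ω (Xb t ω) (ub t ω)) ᵥ* Itilde n') := dist_le_pi_dist _ _ j
          _ ≤ _ := hLσ.trans (mul_le_mul_of_nonneg_left hPd L.coe_nonneg)
      have hσ1 : |σ i t ω (Xε ε t ω) (ub t ω + (if t = s then ε • Δv ω else 0))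
            ⬝ᵥ Mnext μ ℱ W t ω
          - σ i t ω (Xb t ω) (ub t ω) ⬝ᵥ Mnext μ ℱ W t ω|
          ≤ cn * ((L : ℝ) * ((C + ‖Δv ω‖) * ε) * max B₀ 0) := by
        rw [← sub_dotProduct, dotProduct_eq_itilde _ _ (hM0 ω hω t)]
        calc |∑ j : Fin n', _| ≤ ∑ j : Fin n', |((σ i t ω (Xε ε t ω)
              (ub t ω + (if t = s then ε • Δv ω else 0))
              - σ i t ω (Xb t ω) (ub t ω)) ᵥ* Itilde n') j * Mnext μ ℱ W t ω j.castSucc| :=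
            Finset.abs_sum_le_sum_abs _ _
          _ ≤ ∑ _j : Fin n', (L : ℝ) * ((C + ‖Δv ω‖) * ε) * max B₀ 0 :=
            Finset.sum_le_sum fun j _ => by
              rw [abs_mul]
              exact mul_le_mul (h3 j) (hB t htT ω _) (abs_nonneg _)
                (mul_nonneg L.coe_nonneg
                  (mul_nonneg (add_nonneg hC0 (norm_nonneg _)) hε0))
          _ = cn * ((L : ℝ) * ((C + ‖Δv ω‖) * ε) * max B₀ 0) := by
            rw [Finset.sum_const, Finset.card_univ, nsmul_eq_mul]
      -- combine
      have e1' : Xε ε (t+1) ω i - Xb (t+1) ω i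
          = (Xε ε t ω i - Xb t ω i)
            + (b t ω (Xε ε t ω) (ub t ω + (if t = s then ε • Δv ω else 0)) i
              - b t ω (Xb t ω) (ub t ω) i)
            + (σ i t ω (Xε ε t ω) (ub t ω + (if t = s then ε • Δv ω else 0))
                ⬝ᵥ Mnext μ ℱ W t ω
              - σ i t ω (Xb t ω) (ub t ω) ⬝ᵥ Mnext μ ℱ W t ω) := by
        rw [e1, e2]; ring
      have hC1 := hC ε ⟨hε0, hε1⟩ i
      calc |Xε ε (t+1) ω i - Xb (t+1) ω i|
          = |(Xε ε t ω i - Xb t ω i)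
            + (b t ω (Xε ε t ω) (ub t ω + (if t = s then ε • Δv ω else 0)) i
              - b t ω (Xb t ω) (ub t ω) i)
            + (σ i t ω (Xε ε t ω) (ub t ω + (if t = s then ε • Δv ω else 0))
                ⬝ᵥ Mnext μ ℱ W t ω
              - σ i t ω (Xb t ω) (ub t ω) ⬝ᵥ Mnext μ ℱ W t ω)| := by rw [e1']
        _ ≤ |(Xε ε t ω i - Xb t ω i)
            + (b t ω (Xε ε t ω) (ub t ω + (if t = s then ε • Δv ω else 0)) i
              - b t ω (Xb t ω) (ub t ω) i)|
            + |σ i t ω (Xε ε t ω) (ub t ω + (if t = s then ε • Δv ω else 0))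
                ⬝ᵥ Mnext μ ℱ W t ω
              - σ i t ω (Xb t ω) (ub t ω) ⬝ᵥ Mnext μ ℱ W t ω| := abs_add_le _ _
        _ ≤ |Xε ε t ω i - Xb t ω i|
            + |b t ω (Xε ε t ω) (ub t ω + (if t = s then ε • Δv ω else 0)) i
              - b t ω (Xb t ω) (ub t ω) i|
            + |σ i t ω (Xε ε t ω) (ub t ω + (if t = s then ε • Δv ω else 0))
                ⬝ᵥ Mnext μ ℱ W t ω
              - σ i t ω (Xb t ω) (ub t ω) ⬝ᵥ Mnext μ ℱ W t ω| := by
            have := abs_add_le (Xε ε t ω i - Xb t ω i)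
              (b t ω (Xε ε t ω) (ub t ω + (if t = s then ε • Δv ω else 0)) i
                - b t ω (Xb t ω) (ub t ω) i)
            linarith
        _ ≤ C * ε + (L : ℝ) * ((C + ‖Δv ω‖) * ε)
            + cn * ((L : ℝ) * ((C + ‖Δv ω‖) * ε) * max B₀ 0) :=
            add_le_add (add_le_add hC1 hb1) hσ1
        _ = (C + (L : ℝ) * (C + ‖Δv ω‖) * (1 + cn * max B₀ 0)) * ε := by ring

  -- Claim A : pathwise bound on ξ
  have claimA : ∀ ω, μ {ω} ≠ 0 → ∀ t, t ≤ T → ∃ C, 0 ≤ C ∧ ∀ ε ∈ Set.Icc (0:ℝ) 1,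
      ∀ i, |ξ ε t ω i| ≤ C * (ε * ‖Δv ω‖) := by
    intro ω hω t
    induction t with
    | zero =>
      exact fun _ => ⟨0, le_rfl, fun ε hε i => by
        rw [congrFun (hξ0 ε hε ω) i]; simp⟩
    | succ t ih =>
      intro ht1
      have htT : t < T := ht1
      obtain ⟨C, hC0, hC⟩ := ih htT.le
      set cd : ℝ := (Fintype.card (Fin (n' + 1)) : ℝ) with hcd
      have hcdn : (0:ℝ) ≤ cd := Nat.cast_nonneg _
      obtain ⟨N3', hN3'⟩ := Finite.exists_le
        (fun i : Fin m => ‖fderiv ℝ (fun x => σ i t ω x (ub t ω)) (Xb t ω)‖)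
      obtain ⟨N4', hN4'⟩ := Finite.exists_le
        (fun i : Fin m => ‖fderiv ℝ (fun u_ => σ i t ω (Xb t ω) u_) (ub t ω)‖)
      set N1 : ℝ := ‖fderiv ℝ (fun x => b t ω x (ub t ω)) (Xb t ω)‖ with hN1d
      set N2 : ℝ := ‖fderiv ℝ (fun u_ => b t ω (Xb t ω) u_) (ub t ω)‖ with hN2d
      set N3 : ℝ := max N3' 0 with hN3d
      set N4 : ℝ := max N4' 0 with hN4d
      have hN1n : 0 ≤ N1 := norm_nonneg _
      have hN2n : 0 ≤ N2 := norm_nonneg _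
      have hN3n : 0 ≤ N3 := le_max_right _ _
      have hN4n : 0 ≤ N4 := le_max_right _ _
      refine ⟨C + N1 * C + N2 + cd * max B₀ 0 * (C * N3 + N4), ?_, ?_⟩
      · have : 0 ≤ C * N3 + N4 := add_nonneg (mul_nonneg hC0 hN3n) hN4n
        have h2 : 0 ≤ cd * max B₀ 0 * (C * N3 + N4) :=
          mul_nonneg (mul_nonneg hcdn hBnn) this
        have h3 : 0 ≤ N1 * C := mul_nonneg hN1n hC0
        linarith
      intro ε hε i
      obtain ⟨hε0, hε1⟩ := hε
      have hεv : 0 ≤ ε * ‖Δv ω‖ := mul_nonneg hε0 (norm_nonneg _)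
      have e3 := congrFun (hξ' ω hω ε ⟨hε0, hε1⟩ t htT) i
      simp only [Pi.add_apply] at e3
      have hξn : ‖ξ ε t ω‖ ≤ C * (ε * ‖Δv ω‖) :=
        (pi_norm_le_iff_of_nonneg (by positivity)).mpr fun j => by
          rw [Real.norm_eq_abs]; exact hC ε ⟨hε0, hε1⟩ j
      -- bound on the x-derivative term of b
      have hb2 : |fderiv ℝ (fun x => b t ω x (ub t ω)) (Xb t ω) (ξ ε t ω) i|
          ≤ N1 * (C * (ε * ‖Δv ω‖)) := by
        calc |fderiv ℝ (fun x => b t ω x (ub t ω)) (Xb t ω) (ξ ε t ω) i|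
            ≤ ‖fderiv ℝ (fun x => b t ω x (ub t ω)) (Xb t ω) (ξ ε t ω)‖ := by
              simpa [Real.norm_eq_abs] using
                norm_le_pi_norm (fderiv ℝ (fun x => b t ω x (ub t ω)) (Xb t ω) (ξ ε t ω)) i
          _ ≤ N1 * ‖ξ ε t ω‖ :=
              (fderiv ℝ (fun x => b t ω x (ub t ω)) (Xb t ω)).le_opNorm _
          _ ≤ N1 * (C * (ε * ‖Δv ω‖)) := mul_le_mul_of_nonneg_left hξn hN1n
      -- bound on the u-derivative (delta) term of b
      have hδb : |(if t = s then
            ε • fderiv ℝ (fun u_ => b t ω (Xb t ω) u_) (ub t ω) (Δv ω) else 0) i|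
          ≤ N2 * (ε * ‖Δv ω‖) := by
        by_cases hts : t = s
        · rw [if_pos hts, Pi.smul_apply, smul_eq_mul, abs_mul, abs_of_nonneg hε0]
          have h1 : |fderiv ℝ (fun u_ => b t ω (Xb t ω) u_) (ub t ω) (Δv ω) i|
              ≤ N2 * ‖Δv ω‖ := by
            calc |fderiv ℝ (fun u_ => b t ω (Xb t ω) u_) (ub t ω) (Δv ω) i|
                ≤ ‖fderiv ℝ (fun u_ => b t ω (Xb t ω) u_) (ub t ω) (Δv ω)‖ := by
                  simpa [Real.norm_eq_abs] using
                    norm_le_pi_norm (fderiv ℝ (fun u_ => b t ω (Xb t ω) u_)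
                      (ub t ω) (Δv ω)) i
              _ ≤ N2 * ‖Δv ω‖ :=
                  (fderiv ℝ (fun u_ => b t ω (Xb t ω) u_) (ub t ω)).le_opNorm _
          calc ε * |fderiv ℝ (fun u_ => b t ω (Xb t ω) u_) (ub t ω) (Δv ω) i|
              ≤ ε * (N2 * ‖Δv ω‖) := mul_le_mul_of_nonneg_left h1 hε0
            _ = N2 * (ε * ‖Δv ω‖) := by ring
        · rw [if_neg hts, Pi.zero_apply, abs_zero]
          positivity
      -- bound on the martingale term
      have hσ2 : |(fderiv ℝ (fun x => σ i t ω x (ub t ω)) (Xb t ω) (ξ ε t ω)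
            + (if t = s then
                ε • fderiv ℝ (fun u_ => σ i t ω (Xb t ω) u_) (ub t ω) (Δv ω) else 0))
            ⬝ᵥ Mnext μ ℱ W t ω|
          ≤ cd * ((C * N3 + N4) * (ε * ‖Δv ω‖) * max B₀ 0) := by
        have hw : ‖fderiv ℝ (fun x => σ i t ω x (ub t ω)) (Xb t ω) (ξ ε t ω)
              + (if t = s then
                  ε • fderiv ℝ (fun u_ => σ i t ω (Xb t ω) u_) (ub t ω) (Δv ω) else 0)‖
            ≤ (C * N3 + N4) * (ε * ‖Δv ω‖) := by
          have h1 : ‖fderiv ℝ (fun x => σ i t ω x (ub t ω)) (Xb t ω) (ξ ε t ω)‖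
              ≤ N3 * (C * (ε * ‖Δv ω‖)) := by
            calc ‖fderiv ℝ (fun x => σ i t ω x (ub t ω)) (Xb t ω) (ξ ε t ω)‖
                ≤ ‖fderiv ℝ (fun x => σ i t ω x (ub t ω)) (Xb t ω)‖ * ‖ξ ε t ω‖ :=
                  (fderiv ℝ (fun x => σ i t ω x (ub t ω)) (Xb t ω)).le_opNorm _
              _ ≤ N3 * (C * (ε * ‖Δv ω‖)) :=
                  mul_le_mul ((hN3' i).trans (le_max_left _ _)) hξn (norm_nonneg _) hN3n
          have h2 : ‖(if t = s then
                ε • fderiv ℝ (fun u_ => σ i t ω (Xb t ω) u_) (ub t ω) (Δv ω) else 0)‖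
              ≤ N4 * (ε * ‖Δv ω‖) := by
            by_cases hts : t = s
            · rw [if_pos hts, norm_smul, Real.norm_eq_abs, abs_of_nonneg hε0]
              have h3 : ‖fderiv ℝ (fun u_ => σ i t ω (Xb t ω) u_) (ub t ω) (Δv ω)‖
                  ≤ N4 * ‖Δv ω‖ := by
                calc ‖fderiv ℝ (fun u_ => σ i t ω (Xb t ω) u_) (ub t ω) (Δv ω)‖
                    ≤ ‖fderiv ℝ (fun u_ => σ i t ω (Xb t ω) u_) (ub t ω)‖ * ‖Δv ω‖ :=
                      (fderiv ℝ (fun u_ => σ i t ω (Xb t ω) u_) (ub t ω)).le_opNorm _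
                  _ ≤ N4 * ‖Δv ω‖ := mul_le_mul_of_nonneg_right
                      ((hN4' i).trans (le_max_left _ _)) (norm_nonneg _)
              calc ε * ‖fderiv ℝ (fun u_ => σ i t ω (Xb t ω) u_) (ub t ω) (Δv ω)‖
                  ≤ ε * (N4 * ‖Δv ω‖) := mul_le_mul_of_nonneg_left h3 hε0
                _ = N4 * (ε * ‖Δv ω‖) := by ring
            · rw [if_neg hts, norm_zero]
              positivity
          calc ‖_ + _‖ ≤ ‖fderiv ℝ (fun x => σ i t ω x (ub t ω)) (Xb t ω) (ξ ε t ω)‖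
                + ‖(if t = s then
                    ε • fderiv ℝ (fun u_ => σ i t ω (Xb t ω) u_) (ub t ω) (Δv ω) else 0)‖ :=
              norm_add_le _ _
            _ ≤ N3 * (C * (ε * ‖Δv ω‖)) + N4 * (ε * ‖Δv ω‖) := add_le_add h1 h2
            _ = (C * N3 + N4) * (ε * ‖Δv ω‖) := by ring
        calc |(fderiv ℝ (fun x => σ i t ω x (ub t ω)) (Xb t ω) (ξ ε t ω)
              + (if t = s then
                  ε • fderiv ℝ (fun u_ => σ i t ω (Xb t ω) u_) (ub t ω) (Δv ω) else 0))
              ⬝ᵥ Mnext μ ℱ W t ω|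
            ≤ cd * (‖fderiv ℝ (fun x => σ i t ω x (ub t ω)) (Xb t ω) (ξ ε t ω)
              + (if t = s then
                  ε • fderiv ℝ (fun u_ => σ i t ω (Xb t ω) u_) (ub t ω) (Δv ω) else 0)‖
                * max B₀ 0) :=
              abs_dotProduct_le _ _ (fun j => hB t htT ω j)
          _ ≤ cd * ((C * N3 + N4) * (ε * ‖Δv ω‖) * max B₀ 0) := by
              refine mul_le_mul_of_nonneg_left ?_ hcdn
              exact mul_le_mul_of_nonneg_right hw hBnn
      have hC1 := hC ε ⟨hε0, hε1⟩ i
      rw [e3]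
      have habs : |ξ ε t ω i + fderiv ℝ (fun x => b t ω x (ub t ω)) (Xb t ω) (ξ ε t ω) i
          + (if t = s then
              ε • fderiv ℝ (fun u_ => b t ω (Xb t ω) u_) (ub t ω) (Δv ω) else 0) i
          + (fderiv ℝ (fun x => σ i t ω x (ub t ω)) (Xb t ω) (ξ ε t ω)
              + (if t = s then
                  ε • fderiv ℝ (fun u_ => σ i t ω (Xb t ω) u_) (ub t ω) (Δv ω) else 0))
              ⬝ᵥ Mnext μ ℱ W t ω|
          ≤ |ξ ε t ω i| + |fderiv ℝ (fun x => b t ω x (ub t ω)) (Xb t ω) (ξ ε t ω) i|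
            + |(if t = s then
                ε • fderiv ℝ (fun u_ => b t ω (Xb t ω) u_) (ub t ω) (Δv ω) else 0) i|
            + |(fderiv ℝ (fun x => σ i t ω x (ub t ω)) (Xb t ω) (ξ ε t ω)
                + (if t = s then
                    ε • fderiv ℝ (fun u_ => σ i t ω (Xb t ω) u_) (ub t ω) (Δv ω) else 0))
                ⬝ᵥ Mnext μ ℱ W t ω| := by
        exact (abs_add_le _ _).trans (add_le_add_left (abs_add_three _ _ _) _)
      calc _ ≤ _ := habs
        _ ≤ C * (ε * ‖Δv ω‖) + N1 * (C * (ε * ‖Δv ω‖)) + N2 * (ε * ‖Δv ω‖)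
            + cd * ((C * N3 + N4) * (ε * ‖Δv ω‖) * max B₀ 0) :=
            add_le_add (add_le_add (add_le_add hC1 hb2) hδb) hσ2
        _ = (C + N1 * C + N2 + cd * max B₀ 0 * (C * N3 + N4)) * (ε * ‖Δv ω‖) := by ring

  -- Claim C : pathwise o(ε) estimate for the remainder
  have claimC : ∀ ω, μ {ω} ≠ 0 → ∀ t, t ≤ T → ∀ i,
      Tendsto (fun ε => (Xε ε t ω i - Xb t ω i - ξ ε t ω i) / ε)
        (nhdsWithin (0:ℝ) (Set.Ioi 0)) (nhds 0) := by
    intro ω hω t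
    induction t with
    | zero =>
      intro _ i
      refine Tendsto.congr' ?_ (tendsto_const_nhds (x := (0:ℝ)))
      filter_upwards [hIoc] with ε hε
      rw [eq_comm, congrFun (hinit ε ⟨hε.1.le, hε.2⟩ ω) i,
        congrFun (hξ0 ε ⟨hε.1.le, hε.2⟩ ω) i]
      simp
    | succ t ih =>
      intro ht1 i
      have htT : t < T := ht1
      have iht := ih htT.le
      obtain ⟨C, hC0, hC⟩ := claimB ω hω t htT.le
      set cd : ℝ := (Fintype.card (Fin (n' + 1)) : ℝ) with hcd
      have hcdn : (0:ℝ) ≤ cd := Nat.cast_nonneg _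
      have hqle : ∀ ε ∈ Set.Ioc (0:ℝ) 1,
          ‖((Xε ε t ω - Xb t ω, if t = s then ε • Δv ω else 0) :
            (Fin m → ℝ) × (Fin r → ℝ))‖ ≤ (C + ‖Δv ω‖) * ε := by
        intro ε hε
        rw [Prod.norm_def]
        apply max_le
        · have h1 : ‖Xε ε t ω - Xb t ω‖ ≤ C * ε :=
            (pi_norm_le_iff_of_nonneg (mul_nonneg hC0 hε.1.le)).mpr fun j => by
              rw [Real.norm_eq_abs, Pi.sub_apply]
              exact hC ε ⟨hε.1.le, hε.2⟩ j
          nlinarith [norm_nonneg (Δv ω), hε.1]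
        · by_cases hts : t = s
          · rw [if_pos hts, norm_smul, Real.norm_eq_abs, abs_of_pos hε.1]
            nlinarith [hC0, hε.1, norm_nonneg (Δv ω)]
          · rw [if_neg hts, norm_zero]
            nlinarith [hC0, norm_nonneg (Δv ω), hε.1]
      have hq0 : Tendsto (fun ε => ((Xε ε t ω - Xb t ω, if t = s then ε • Δv ω else 0) :
            (Fin m → ℝ) × (Fin r → ℝ))) (nhdsWithin (0:ℝ) (Set.Ioi 0)) (nhds 0) := by
        apply squeeze_zero_norm' (a := fun ε => (C + ‖Δv ω‖) * ε)
        · filter_upwards [hIoc] with ε hε using hqle ε hε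
        · have h1 : Tendsto (fun ε : ℝ => (C + ‖Δv ω‖) * ε) (nhds 0) (nhds 0) :=
            (continuous_const.mul continuous_id).tendsto' 0 0 (by simp)
          exact h1.mono_left nhdsWithin_le_nhds
      have hqO : (fun ε => ((Xε ε t ω - Xb t ω, if t = s then ε • Δv ω else 0) :
            (Fin m → ℝ) × (Fin r → ℝ))) =O[nhdsWithin (0:ℝ) (Set.Ioi 0)] fun ε => ε := by
        rw [Asymptotics.isBigO_iff]
        refine ⟨C + ‖Δv ω‖, ?_⟩
        filter_upwards [hIoc] with ε hε
        rw [Real.norm_eq_abs ε, abs_of_pos hε.1]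
        exact hqle ε hε
      have hRb := remainder_tendsto (b t ω) (Xb t ω) (ub t ω)
        ((hbC1 t ω).differentiable one_ne_zero (Xb t ω, ub t ω))
        (h := fun ε => Xε ε t ω - Xb t ω) (k := fun ε => if t = s then ε • Δv ω else 0)
        hq0 hqO
      have hRσ := remainder_tendsto (σ i t ω) (Xb t ω) (ub t ω)
        ((hσC1 i t ω).differentiable one_ne_zero (Xb t ω, ub t ω))
        (h := fun ε => Xε ε t ω - Xb t ω) (k := fun ε => if t = s then ε • Δv ω else 0)
        hq0 hqO
      have hsum : Tendsto (fun ε => ∑ j : Fin m,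
          |(Xε ε t ω j - Xb t ω j - ξ ε t ω j) / ε|)
          (nhdsWithin (0:ℝ) (Set.Ioi 0)) (nhds 0) := by
        have h := tendsto_finset_sum (Finset.univ : Finset (Fin m)) fun j _ => (iht j).abs
        simpa using h
      have hsumeq : ∀ ε : ℝ, 0 < ε → (∑ j : Fin m,
          |(Xε ε t ω j - Xb t ω j - ξ ε t ω j) / ε|)
          = (∑ j : Fin m, |Xε ε t ω j - Xb t ω j - ξ ε t ω j|) / ε := by
        intro ε hε
        rw [Finset.sum_div]
        exact Finset.sum_congr rfl fun j _ => by rw [abs_div, abs_of_pos hε]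
      have hvle : ∀ ε : ℝ, ‖Xε ε t ω - Xb t ω - ξ ε t ω‖
          ≤ ∑ j : Fin m, |Xε ε t ω j - Xb t ω j - ξ ε t ω j| := by
        intro ε
        refine (pi_norm_le_sum_abs _).trans ?_
        exact le_of_eq (Finset.sum_congr rfl fun j _ => by
          rw [Pi.sub_apply, Pi.sub_apply])
      -- f2 : the Taylor remainder of b, component i
      have hf2 : Tendsto (fun ε =>
          ((fun pp : (Fin m → ℝ) × (Fin r → ℝ) => b t ω pp.1 pp.2)
              ((Xb t ω, ub t ω) + (Xε ε t ω - Xb t ω, if t = s then ε • Δv ω else 0))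
            - (fun pp : (Fin m → ℝ) × (Fin r → ℝ) => b t ω pp.1 pp.2) (Xb t ω, ub t ω)
            - fderiv ℝ (fun pp : (Fin m → ℝ) × (Fin r → ℝ) => b t ω pp.1 pp.2)
                (Xb t ω, ub t ω)
                (Xε ε t ω - Xb t ω, if t = s then ε • Δv ω else 0)) i / ε)
          (nhdsWithin (0:ℝ) (Set.Ioi 0)) (nhds 0) := by
        apply squeeze_zero_norm' ?_ hRb
        filter_upwards [hpos] with ε hε
        rw [Real.norm_eq_abs, abs_div, abs_of_pos hε]
        refine (div_le_div_iff_of_pos_right hε).mpr ?_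
        simpa [Real.norm_eq_abs] using norm_le_pi_norm
          ((fun pp : (Fin m → ℝ) × (Fin r → ℝ) => b t ω pp.1 pp.2)
              ((Xb t ω, ub t ω) + (Xε ε t ω - Xb t ω, if t = s then ε • Δv ω else 0))
            - (fun pp : (Fin m → ℝ) × (Fin r → ℝ) => b t ω pp.1 pp.2) (Xb t ω, ub t ω)
            - fderiv ℝ (fun pp : (Fin m → ℝ) × (Fin r → ℝ) => b t ω pp.1 pp.2)
                (Xb t ω, ub t ω)
                (Xε ε t ω - Xb t ω, if t = s then ε • Δv ω else 0)) i
      -- f3 : the x-derivative of b applied to the running error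
      have hf3 : Tendsto (fun ε =>
          fderiv ℝ (fun x => b t ω x (ub t ω)) (Xb t ω)
            (Xε ε t ω - Xb t ω - ξ ε t ω) i / ε)
          (nhdsWithin (0:ℝ) (Set.Ioi 0)) (nhds 0) := by
        apply squeeze_zero_norm'
          (a := fun ε => ‖fderiv ℝ (fun x => b t ω x (ub t ω)) (Xb t ω)‖ *
            ∑ j : Fin m, |(Xε ε t ω j - Xb t ω j - ξ ε t ω j) / ε|)
        · filter_upwards [hpos] with ε hε
          rw [Real.norm_eq_abs, abs_div, abs_of_pos hε, hsumeq ε hε, mul_div_assoc']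
          refine (div_le_div_iff_of_pos_right hε).mpr ?_
          have h1 : |fderiv ℝ (fun x => b t ω x (ub t ω)) (Xb t ω)
              (Xε ε t ω - Xb t ω - ξ ε t ω) i|
              ≤ ‖fderiv ℝ (fun x => b t ω x (ub t ω)) (Xb t ω)
                (Xε ε t ω - Xb t ω - ξ ε t ω)‖ := by
            simpa [Real.norm_eq_abs] using norm_le_pi_norm
              (fderiv ℝ (fun x => b t ω x (ub t ω)) (Xb t ω)
                (Xε ε t ω - Xb t ω - ξ ε t ω)) i
          refine h1.trans (((fderiv ℝ (fun x => b t ω x (ub t ω))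
            (Xb t ω)).le_opNorm _).trans ?_)
          exact mul_le_mul_of_nonneg_left (hvle ε) (norm_nonneg _)
        · simpa using hsum.const_mul ‖fderiv ℝ (fun x => b t ω x (ub t ω)) (Xb t ω)‖
      -- f4 : the Taylor remainder of σ, dotted with M
      have hf4 : Tendsto (fun ε =>
          (((fun pp : (Fin m → ℝ) × (Fin r → ℝ) => σ i t ω pp.1 pp.2)
              ((Xb t ω, ub t ω) + (Xε ε t ω - Xb t ω, if t = s then ε • Δv ω else 0))
            - (fun pp : (Fin m → ℝ) × (Fin r → ℝ) => σ i t ω pp.1 pp.2) (Xb t ω, ub t ω)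
            - fderiv ℝ (fun pp : (Fin m → ℝ) × (Fin r → ℝ) => σ i t ω pp.1 pp.2)
                (Xb t ω, ub t ω)
                (Xε ε t ω - Xb t ω, if t = s then ε • Δv ω else 0))
            ⬝ᵥ Mnext μ ℱ W t ω) / ε)
          (nhdsWithin (0:ℝ) (Set.Ioi 0)) (nhds 0) := by
        apply squeeze_zero_norm'
          (a := fun ε => cd * max B₀ 0 *
            (‖(fun pp : (Fin m → ℝ) × (Fin r → ℝ) => σ i t ω pp.1 pp.2)
              ((Xb t ω, ub t ω) + (Xε ε t ω - Xb t ω, if t = s then ε • Δv ω else 0))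
            - (fun pp : (Fin m → ℝ) × (Fin r → ℝ) => σ i t ω pp.1 pp.2) (Xb t ω, ub t ω)
            - fderiv ℝ (fun pp : (Fin m → ℝ) × (Fin r → ℝ) => σ i t ω pp.1 pp.2)
                (Xb t ω, ub t ω)
                (Xε ε t ω - Xb t ω, if t = s then ε • Δv ω else 0)‖ / ε))
        · filter_upwards [hpos] with ε hε
          rw [Real.norm_eq_abs, abs_div, abs_of_pos hε, mul_div_assoc']
          refine (div_le_div_iff_of_pos_right hε).mpr ?_
          refine (abs_dotProduct_le _ _ (fun j => hB t htT ω j)).trans (le_of_eq ?_)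
          ring
        · have := hRσ.const_mul (cd * max B₀ 0)
          simpa using this
      -- f5 : the x-derivative of σ applied to the running error, dotted with M
      have hf5 : Tendsto (fun ε =>
          (fderiv ℝ (fun x => σ i t ω x (ub t ω)) (Xb t ω)
              (Xε ε t ω - Xb t ω - ξ ε t ω) ⬝ᵥ Mnext μ ℱ W t ω) / ε)
          (nhdsWithin (0:ℝ) (Set.Ioi 0)) (nhds 0) := by
        apply squeeze_zero_norm'
          (a := fun ε => cd * max B₀ 0 * ‖fderiv ℝ (fun x => σ i t ω x (ub t ω))
              (Xb t ω)‖ *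
            ∑ j : Fin m, |(Xε ε t ω j - Xb t ω j - ξ ε t ω j) / ε|)
        · filter_upwards [hpos] with ε hε
          rw [Real.norm_eq_abs, abs_div, abs_of_pos hε, hsumeq ε hε, mul_div_assoc']
          refine (div_le_div_iff_of_pos_right hε).mpr ?_
          refine (abs_dotProduct_le _ _ (fun j => hB t htT ω j)).trans ?_
          have h2 : ‖fderiv ℝ (fun x => σ i t ω x (ub t ω)) (Xb t ω)
              (Xε ε t ω - Xb t ω - ξ ε t ω)‖
              ≤ ‖fderiv ℝ (fun x => σ i t ω x (ub t ω)) (Xb t ω)‖ *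
                ∑ j : Fin m, |Xε ε t ω j - Xb t ω j - ξ ε t ω j| :=
            ((fderiv ℝ (fun x => σ i t ω x (ub t ω)) (Xb t ω)).le_opNorm _).trans
              (mul_le_mul_of_nonneg_left (hvle ε) (norm_nonneg _))
          calc cd * (‖fderiv ℝ (fun x => σ i t ω x (ub t ω)) (Xb t ω)
                (Xε ε t ω - Xb t ω - ξ ε t ω)‖ * max B₀ 0)
              ≤ cd * ((‖fderiv ℝ (fun x => σ i t ω x (ub t ω)) (Xb t ω)‖ *
                ∑ j : Fin m, |Xε ε t ω j - Xb t ω j - ξ ε t ω j|) * max B₀ 0) := by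
                refine mul_le_mul_of_nonneg_left ?_ hcdn
                exact mul_le_mul_of_nonneg_right h2 hBnn
            _ = cd * max B₀ 0 * ‖fderiv ℝ (fun x => σ i t ω x (ub t ω)) (Xb t ω)‖ *
                (∑ j : Fin m, |Xε ε t ω j - Xb t ω j - ξ ε t ω j|) := by ring
        · have := hsum.const_mul (cd * max B₀ 0 *
            ‖fderiv ℝ (fun x => σ i t ω x (ub t ω)) (Xb t ω)‖)
          simpa using this
      -- assemble
      have hall := (((((iht i).add hf2).add hf3).add hf4).add hf5)
      rw [show (0:ℝ) + 0 + 0 + 0 + 0 = 0 by norm_num] at hall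
      refine Tendsto.congr' ?_ hall
      filter_upwards [hIoc] with ε hε
      have hIcc : ε ∈ Set.Icc (0:ℝ) 1 := ⟨hε.1.le, hε.2⟩
      have e1 := congrFun (hXε' ω hω ε hIcc t htT) i
      have e2 := congrFun (hXb' ω hω t htT) i
      have e3 := congrFun (hξ' ω hω ε hIcc t htT) i
      have hxx : Xb t ω + (Xε ε t ω - Xb t ω) = Xε ε t ω := by
        funext j; simp only [Pi.add_apply, Pi.sub_apply]; ring
      have hTb := taylor_decomp (b t ω) (Xb t ω) (Xε ε t ω - Xb t ω) (ub t ω)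
        (if t = s then ε • Δv ω else 0) (ξ ε t ω)
        ((hbC1 t ω).differentiable one_ne_zero (Xb t ω, ub t ω))
      rw [hxx] at hTb
      have hδb : fderiv ℝ (fun u => b t ω (Xb t ω) u) (ub t ω)
          (if t = s then ε • Δv ω else 0)
          = (if t = s then
              ε • fderiv ℝ (fun u_ => b t ω (Xb t ω) u_) (ub t ω) (Δv ω) else 0) := by
        by_cases hts : t = s
        · rw [if_pos hts, if_pos hts, _root_.map_smul]
        · rw [if_neg hts, if_neg hts, _root_.map_zero]
      rw [hδb] at hTb
      have hTσ := taylor_decomp (σ i t ω) (Xb t ω) (Xε ε t ω - Xb t ω) (ub t ω)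
        (if t = s then ε • Δv ω else 0) (ξ ε t ω)
        ((hσC1 i t ω).differentiable one_ne_zero (Xb t ω, ub t ω))
      rw [hxx] at hTσ
      have hδσ : fderiv ℝ (fun u => σ i t ω (Xb t ω) u) (ub t ω)
          (if t = s then ε • Δv ω else 0)
          = (if t = s then
              ε • fderiv ℝ (fun u_ => σ i t ω (Xb t ω) u_) (ub t ω) (Δv ω) else 0) := by
        by_cases hts : t = s
        · rw [if_pos hts, if_pos hts, _root_.map_smul]
        · rw [if_neg hts, if_neg hts, _root_.map_zero]
      rw [hδσ] at hTσ
      have hTbi := congrFun hTb i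
      have hTσd := congrArg (fun v => v ⬝ᵥ Mnext μ ℱ W t ω) hTσ
      rw [← add_div, ← add_div, ← add_div, ← add_div]
      rw [eq_comm]
      congr 1
      simp only [Pi.add_apply, Pi.sub_apply, ite_apply, Pi.zero_apply, Pi.smul_apply,
        smul_eq_mul, sub_dotProduct, add_dotProduct] at e1 e2 e3 hTbi hTσd ⊢
      rw [e1, e2, e3]
      linarith [hTbi, hTσd]

  constructor
  · -- Part 1
    have claimA2 : ∀ pp : Ω × Fin (T + 1), ∃ C, 0 ≤ C ∧ (μ {pp.1} ≠ 0 →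
        ∀ ε ∈ Set.Icc (0:ℝ) 1, ∀ i, |ξ ε (pp.2 : ℕ) pp.1 i| ≤ C * (ε * ‖Δv pp.1‖)) := by
      rintro ⟨ω, t'⟩
      by_cases hω : μ {ω} = 0
      · exact ⟨0, le_rfl, fun hc => absurd hω hc⟩
      · obtain ⟨C, h0, h⟩ := claimA ω hω t' (Nat.lt_succ_iff.mp t'.isLt)
        exact ⟨C, h0, fun _ => h⟩
    choose Cf hCf0 hCf using claimA2
    obtain ⟨K, hK⟩ := Finite.exists_le Cf
    have hK1 : (0:ℝ) < max K 0 + 1 := by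
      have := le_max_right K (0:ℝ); linarith
    refine ⟨((m:ℝ) + 1) * (max K 0 + 1) ^ 2, by positivity, ?_⟩
    intro ε hε t ht
    have hptw : ∀ᵐ ω ∂μ, (∑ i, (ξ ε t ω i) ^ 2)
        ≤ (((m:ℝ) + 1) * (max K 0 + 1) ^ 2 * ε ^ 2) * ∑ j, (Δv ω j) ^ 2 := by
      rw [ae_iff_of_countable]
      intro ω hω
      have hb1 := hCf (ω, ⟨t, Nat.lt_succ_of_le ht⟩) hω ε hε
      have hCK : Cf (ω, ⟨t, Nat.lt_succ_of_le ht⟩) ≤ max K 0 + 1 :=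
        le_trans (le_trans (hK _) (le_max_left _ _)) (by linarith)
      have hstep : ∀ i, (ξ ε t ω i) ^ 2 ≤ ((max K 0 + 1) * (ε * ‖Δv ω‖)) ^ 2 := by
        intro i
        have h2 : |ξ ε t ω i| ≤ (max K 0 + 1) * (ε * ‖Δv ω‖) :=
          (hb1 i).trans (mul_le_mul_of_nonneg_right hCK
            (mul_nonneg hε.1 (norm_nonneg _)))
        calc (ξ ε t ω i) ^ 2 = |ξ ε t ω i| ^ 2 := (sq_abs _).symm
          _ ≤ _ := pow_le_pow_left₀ (abs_nonneg _) h2 2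
      have hnv : ‖Δv ω‖ ^ 2 ≤ ∑ j, (Δv ω j) ^ 2 := pi_norm_sq_le _
      calc ∑ i, (ξ ε t ω i) ^ 2
          ≤ ∑ _i : Fin m, ((max K 0 + 1) * (ε * ‖Δv ω‖)) ^ 2 :=
            Finset.sum_le_sum fun i _ => hstep i
        _ = (m : ℝ) * ((max K 0 + 1) * (ε * ‖Δv ω‖)) ^ 2 := by
            rw [Finset.sum_const, Finset.card_univ, Fintype.card_fin, nsmul_eq_mul]
        _ = (m : ℝ) * ((max K 0 + 1) ^ 2 * (ε ^ 2 * ‖Δv ω‖ ^ 2)) := by ring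
        _ ≤ ((m:ℝ) + 1) * ((max K 0 + 1) ^ 2 * (ε ^ 2 * ‖Δv ω‖ ^ 2)) := by
            have hnn : (0:ℝ) ≤ (max K 0 + 1) ^ 2 * (ε ^ 2 * ‖Δv ω‖ ^ 2) := by positivity
            have hm : (m : ℝ) ≤ (m : ℝ) + 1 := by linarith
            exact mul_le_mul_of_nonneg_right hm hnn
        _ = (((m:ℝ) + 1) * (max K 0 + 1) ^ 2 * ε ^ 2) * ‖Δv ω‖ ^ 2 := by ring
        _ ≤ (((m:ℝ) + 1) * (max K 0 + 1) ^ 2 * ε ^ 2) * ∑ j, (Δv ω j) ^ 2 := by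
            exact mul_le_mul_of_nonneg_left hnv (by positivity)
    calc ∫ ω, (∑ i, (ξ ε t ω i) ^ 2) ∂μ
        ≤ ∫ ω, (((m:ℝ) + 1) * (max K 0 + 1) ^ 2 * ε ^ 2) * ∑ j, (Δv ω j) ^ 2 ∂μ :=
          integral_mono_ae Integrable.of_finite Integrable.of_finite hptw
      _ = (((m:ℝ) + 1) * (max K 0 + 1) ^ 2 * ε ^ 2) * ∫ ω, (∑ j, (Δv ω j) ^ 2) ∂μ :=
          integral_const_mul _ _
      _ = ((m:ℝ) + 1) * (max K 0 + 1) ^ 2 * ε ^ 2 * ∫ ω, (∑ j, (Δv ω j) ^ 2) ∂μ := by ring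
  · -- Part 2
    intro t ht
    have hrw : ∀ᶠ ε in nhdsWithin (0:ℝ) (Set.Ioi 0),
        (∑ ω : Ω, (μ {ω}).toReal * ∑ i, ((Xε ε t ω i - Xb t ω i - ξ ε t ω i) / ε) ^ 2)
        = (∫ ω, (∑ i, (Xε ε t ω i - Xb t ω i - ξ ε t ω i) ^ 2) ∂μ) / ε ^ 2 := by
      filter_upwards [hpos] with ε hε
      rw [integral_fintype (μ := μ) Integrable.of_finite, Finset.sum_div]
      refine Finset.sum_congr rfl fun ω _ => ?_
      rw [smul_eq_mul, mul_div_assoc, Finset.sum_div]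
      congr 1
      exact Finset.sum_congr rfl fun i _ => by rw [div_pow]
    refine Tendsto.congr' hrw ?_
    have h0 : Tendsto (fun ε => ∑ ω : Ω, (μ {ω}).toReal *
        ∑ i, ((Xε ε t ω i - Xb t ω i - ξ ε t ω i) / ε) ^ 2)
        (nhdsWithin (0:ℝ) (Set.Ioi 0)) (nhds (∑ _ω : Ω, (0:ℝ))) := by
      refine tendsto_finset_sum _ fun ω _ => ?_
      by_cases hω : μ {ω} = 0
      · simp only [hω, ENNReal.toReal_zero, zero_mul]
        exact tendsto_const_nhds
      · have hsq : ∀ i : Fin m, Tendsto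
            (fun ε => ((Xε ε t ω i - Xb t ω i - ξ ε t ω i) / ε) ^ 2)
            (nhdsWithin (0:ℝ) (Set.Ioi 0)) (nhds 0) := by
          intro i
          have h := claimC ω hω t ht i
          have := h.mul h
          rw [mul_zero] at this
          refine this.congr fun ε => ?_
          rw [sq]
        have hsum := tendsto_finset_sum (Finset.univ : Finset (Fin m)) fun i _ => hsq i
        have := hsum.const_mul ((μ {ω}).toReal)
        simpa using this
    simpa using h0
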